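/- (Multiplication) Let (I, m, e₋, e₊) be a parametrised interval set, and let neg : I → I be the unique midpoint homomorphism with neg(e₊) = e₋ and neg(e₋) = e₊; write o = m(e₋, e₊). Then there exists a unique function mul : I × I → I satisfying mul(x, e₋) = neg x, mul(x, e₊) = x, and mul(x, m(y,z)) = m(mul(x,y), mul(x,z)) for all x, y, z ∈ I. Moreover mul satisfies mul(x, o) = o, mul(x,y) = mul(y,x), and mul(mul(x,y), z) = mul(x, mul(y,z)) for all x, y, z ∈ I. -/

import Mathlib

/-- A midpoint operation: idempotent, commutative, satisfying transposition. -/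
def IsMidpoint {A : Type} (m : A → A → A) : Prop :=
  (∀ x, m x x = x) ∧ (∀ x y, m x y = m y x) ∧
    (∀ x y z w, m (m x y) (m z w) = m (m x z) (m y w))

/-- Cancellation: `m x y = m x z` implies `y = z`. -/
def Cancellative {A : Type} (m : A → A → A) : Prop :=
  ∀ x y z, m x y = m x z → y = z

/-- Iterativity in the category of sets. -/
def Iterative {A : Type} (m : A → A → A) : Prop :=
  ∀ (X : Type) (c : X → A × X), ∃! u : X → A, ∀ x, u x = m (c x).1 (u (c x).2)

/-- The unfolding property of an infinitary operation `M` with respect to `m`. -/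
def Unfolding {A : Type} (m : A → A → A) (M : (ℕ → A) → A) : Prop :=
  ∀ x : ℕ → A, M x = m (x 0) (M fun i => x (i + 1))

/-- The canonicity property of an infinitary operation `M` with respect to `m`. -/
def Canonicity {A : Type} (m : A → A → A) (M : (ℕ → A) → A) : Prop :=
  ∀ x y : ℕ → A, (∀ i, y i = m (x i) (y (i + 1))) → y 0 = M x

/-- A parametrised interval set: a midpoint-convex body `(I, m)` with two
points `em, ep` satisfying the parametrised universal property. -/
def IsParamIntervalSet {I : Type} (m : I → I → I) (em ep : I) : Prop :=
  IsMidpoint m ∧ Cancellative m ∧ Iterative m ∧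
  ∀ (P A : Type) (m' : A → A → A), IsMidpoint m' → Cancellative m' → Iterative m' →
    ∀ xm xp : P → A, ∃! h : P → I → A,
      (∀ p, h p em = xm p) ∧ (∀ p, h p ep = xp p) ∧
      ∀ p u v, h p (m u v) = m' (h p u) (h p v)

/-! Every map in sight is a midpoint endomorphism of `I`, and such an endomorphism is determined
by its values at `e₋` and `e₊` (the universal property with a one-point parameter set). Each identity
is therefore proved by exhibiting both sides as endomorphisms and comparing them at the two
endpoints; for associativity, `mul (mul x y)` and `mul x ∘ mul y` agree at `e₋` because
`mul x` commutes with `neg`. -/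

def IsMidpointHom {A B : Type} (m : A → A → A) (m' : B → B → B) (f : A → B) : Prop :=
  ∀ u v, f (m u v) = m' (f u) (f v)

namespace IsMidpointHom

variable {A B C : Type} {m : A → A → A} {m' : B → B → B} {m'' : C → C → C}

theorem id : IsMidpointHom m m fun x => x := fun _ _ => rfl

theorem const (hid : ∀ x, m' x x = x) (b : B) : IsMidpointHom m m' fun _ => b :=
  fun _ _ => (hid b).symm

theorem comp {g : B → C} {f : A → B} (hg : IsMidpointHom m' m'' g) (hf : IsMidpointHom m m' f) :
    IsMidpointHom m m'' (g ∘ f) := fun u v => by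
  simp only [Function.comp_apply, hf u v, hg (f u) (f v)]

theorem midpoint {f g : A → B} (hm' : IsMidpoint m') (hf : IsMidpointHom m m' f)
    (hg : IsMidpointHom m m' g) : IsMidpointHom m m' fun x => m' (f x) (g x) := fun u v => by
  simp only [hf u v, hg u v, hm'.2.2]

end IsMidpointHom

def IsIntervalMul {I : Type} (m : I → I → I) (em ep : I) (neg : I → I) (mul : I → I → I) :
    Prop :=
  (∀ x, mul x em = neg x) ∧ (∀ x, mul x ep = x) ∧ ∀ x, IsMidpointHom m m (mul x)

namespace IsParamIntervalSet

variable {I : Type} {m : I → I → I} {em ep : I}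

theorem hom_ext (hI : IsParamIntervalSet m em ep) {A : Type} {m' : A → A → A}
    (hm' : IsMidpoint m') (hc' : Cancellative m') (hit' : Iterative m') {f g : I → A}
    (hf : IsMidpointHom m m' f) (hg : IsMidpointHom m m' g) (hem : f em = g em)
    (hep : f ep = g ep) : f = g := by
  obtain ⟨h, -, huniq⟩ := hI.2.2.2 PUnit A m' hm' hc' hit' (fun _ => g em) (fun _ => g ep)
  have hfh := huniq (fun _ => f) ⟨fun _ => hem, fun _ => hep, fun _ => hf⟩
  have hgh := huniq (fun _ => g) ⟨fun _ => rfl, fun _ => rfl, fun _ => hg⟩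
  exact congrFun (hfh.trans hgh.symm) PUnit.unit

theorem endo_ext (hI : IsParamIntervalSet m em ep) {f g : I → I} (hf : IsMidpointHom m m f)
    (hg : IsMidpointHom m m g) (hem : f em = g em) (hep : f ep = g ep) : f = g :=
  hI.hom_ext hI.1 hI.2.1 hI.2.2.1 hf hg hem hep

variable {neg : I → I}

theorem neg_neg (hI : IsParamIntervalSet m em ep) (hneg : IsMidpointHom m m neg)
    (hnem : neg em = ep) (hnep : neg ep = em) (x : I) : neg (neg x) = x :=
  congrFun (hI.endo_ext (hneg.comp hneg) IsMidpointHom.id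
    (by simp only [Function.comp_apply, hnem, hnep])
    (by simp only [Function.comp_apply, hnem, hnep])) x

theorem midpoint_self_neg (hI : IsParamIntervalSet m em ep) (hneg : IsMidpointHom m m neg)
    (hnem : neg em = ep) (hnep : neg ep = em) (x : I) : m x (neg x) = m em ep :=
  congrFun (hI.endo_ext (IsMidpointHom.id.midpoint hI.1 hneg) (IsMidpointHom.const hI.1.1 _)
    (by rw [hnem]) (by rw [hnep, hI.1.2.1])) x

theorem existsUnique_isIntervalMul (hI : IsParamIntervalSet m em ep) :
    ∃! mul : I → I → I, IsIntervalMul m em ep neg mul :=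
  hI.2.2.2 I I m hI.1 hI.2.1 hI.2.2.1 neg fun x => x

end IsParamIntervalSet

namespace IsIntervalMul

variable {I : Type} {m : I → I → I} {em ep : I} {neg : I → I} {mul : I → I → I}

theorem mul_left_em (hI : IsParamIntervalSet m em ep) (hneg : IsMidpointHom m m neg)
    (hnep : neg ep = em) (hmul : IsIntervalMul m em ep neg mul) : mul em = neg :=
  hI.endo_ext (hmul.2.2 em) hneg (hmul.1 em) (by rw [hmul.2.1, hnep])

theorem mul_left_ep (hI : IsParamIntervalSet m em ep) (hnep : neg ep = em)
    (hmul : IsIntervalMul m em ep neg mul) : mul ep = fun y => y :=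
  hI.endo_ext (hmul.2.2 ep) IsMidpointHom.id (by rw [hmul.1, hnep]) (hmul.2.1 ep)

theorem mul_midpoint_left (hI : IsParamIntervalSet m em ep) (hneg : IsMidpointHom m m neg)
    (hmul : IsIntervalMul m em ep neg mul) (a b : I) :
    mul (m a b) = fun c => m (mul a c) (mul b c) :=
  hI.endo_ext (hmul.2.2 (m a b)) ((hmul.2.2 a).midpoint hI.1 (hmul.2.2 b))
    (by simp only [hmul.1, hneg a b]) (by simp only [hmul.2.1])

theorem mul_comm (hI : IsParamIntervalSet m em ep) (hneg : IsMidpointHom m m neg)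
    (hnep : neg ep = em) (hmul : IsIntervalMul m em ep neg mul) (x y : I) :
    mul x y = mul y x := by
  have hflip : IsMidpointHom m m fun y => mul y x := fun u v =>
    congrFun (mul_midpoint_left hI hneg hmul u v) x
  refine congrFun (hI.endo_ext (hmul.2.2 x) hflip ?_ ?_) y
  · rw [hmul.1, mul_left_em hI hneg hnep hmul]
  · rw [hmul.2.1, mul_left_ep hI hnep hmul]

theorem mul_neg_right (hI : IsParamIntervalSet m em ep) (hneg : IsMidpointHom m m neg)
    (hnem : neg em = ep) (hnep : neg ep = em) (hmul : IsIntervalMul m em ep neg mul) (x y : I) :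
    mul x (neg y) = neg (mul x y) := by
  refine congrFun (hI.endo_ext ((hmul.2.2 x).comp hneg) (hneg.comp (hmul.2.2 x)) ?_ ?_) y
  · simp only [Function.comp_apply, hnem, hmul.2.1, hmul.1, hI.neg_neg hneg hnem hnep]
  · simp only [Function.comp_apply, hnep, hmul.2.1, hmul.1]

theorem mul_assoc (hI : IsParamIntervalSet m em ep) (hneg : IsMidpointHom m m neg)
    (hnem : neg em = ep) (hnep : neg ep = em) (hmul : IsIntervalMul m em ep neg mul) (x y z : I) :
    mul (mul x y) z = mul x (mul y z) := by
  refine congrFun (hI.endo_ext (hmul.2.2 (mul x y)) ((hmul.2.2 x).comp (hmul.2.2 y)) ?_ ?_) z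
  · simp only [Function.comp_apply, hmul.1, mul_neg_right hI hneg hnem hnep hmul]
  · simp only [Function.comp_apply, hmul.2.1]

theorem mul_midpoint_ends (hI : IsParamIntervalSet m em ep) (hneg : IsMidpointHom m m neg)
    (hnem : neg em = ep) (hnep : neg ep = em) (hmul : IsIntervalMul m em ep neg mul) (x : I) :
    mul x (m em ep) = m em ep := by
  rw [hmul.2.2, hmul.1, hmul.2.1, hI.1.2.1, hI.midpoint_self_neg hneg hnem hnep]

end IsIntervalMul

/-- Multiplication on a parametrised interval set: there is a unique function
`mul` that is a right-homomorphism with `mul x em = neg x` and `mul x ep = x`;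
it absorbs the midpoint `o` of the endpoints, and is commutative and
associative. -/
theorem interval_multiplication (I : Type) (m : I → I → I) (em ep : I)
    (hI : IsParamIntervalSet m em ep)
    (neg : I → I)
    (hneg : neg ep = em ∧ neg em = ep ∧ ∀ x y, neg (m x y) = m (neg x) (neg y)) :
    (∃! mul : I → I → I,
      (∀ x, mul x em = neg x) ∧ (∀ x, mul x ep = x) ∧
      ∀ x y z, mul x (m y z) = m (mul x y) (mul x z)) ∧
    ∀ mul : I → I → I,
      ((∀ x, mul x em = neg x) ∧ (∀ x, mul x ep = x) ∧
        ∀ x y z, mul x (m y z) = m (mul x y) (mul x z)) →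
      (∀ x, mul x (m em ep) = m em ep) ∧ (∀ x y, mul x y = mul y x) ∧
        ∀ x y z, mul (mul x y) z = mul x (mul y z) := by
  obtain ⟨hnep, hnem, hneg⟩ := hneg
  refine ⟨hI.existsUnique_isIntervalMul, fun mul hmul => ⟨?_, ?_, ?_⟩⟩
  · exact IsIntervalMul.mul_midpoint_ends hI hneg hnem hnep hmul
  · exact IsIntervalMul.mul_comm hI hneg hnep hmul
  · exact IsIntervalMul.mul_assoc hI hneg hnem hnep hmul
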